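/- Let n ≥ 1, let A, B ∈ ℙ_n, and let t ∈ ℝ. Then X = A ♮_t B is the unique positive definite matrix X ∈ ℙ_n satisfying the equation A^{-1} # X = (A^{-1} # B)^t. -/

import Mathlib

/-! The metric geometric mean `M # X` is the unique positive definite solution `G` of the Riccati
equation `G M⁻¹ G = X`: it solves it by construction, and two positive solutions `G, H` give
`(R G R)² = (R H R)²` for `R = M^{1/2}`, so they agree by uniqueness of positive square roots.
For `M = A⁻¹` and `G = (A⁻¹ # B)^t` the Riccati equation reads `X = G A G = A ♮_t B`. -/

open Matrix
open scoped ComplexOrder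

/-- Real power `A^t = exp(t · log A)` of a Hermitian positive definite matrix, defined via
the functional calculus (spectral decomposition). -/
noncomputable def mpow {n : ℕ} (A : Matrix (Fin n) (Fin n) ℂ) (t : ℝ) :
    Matrix (Fin n) (Fin n) ℂ :=
  if hA : A.IsHermitian then
    (hA.eigenvectorUnitary : Matrix (Fin n) (Fin n) ℂ) *
      Matrix.diagonal (fun i => ((hA.eigenvalues i ^ t : ℝ) : ℂ)) *
      (star (hA.eigenvectorUnitary : Matrix (Fin n) (Fin n) ℂ))
  else A

/-- Logarithm of a Hermitian positive definite matrix via the functional calculus. -/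
noncomputable def mlog {n : ℕ} (A : Matrix (Fin n) (Fin n) ℂ) : Matrix (Fin n) (Fin n) ℂ :=
  if hA : A.IsHermitian then
    (hA.eigenvectorUnitary : Matrix (Fin n) (Fin n) ℂ) *
      Matrix.diagonal (fun i => ((Real.log (hA.eigenvalues i) : ℝ) : ℂ)) *
      (star (hA.eigenvectorUnitary : Matrix (Fin n) (Fin n) ℂ))
  else A

/-- Metric geometric mean `A # B = A^{1/2} (A^{-1/2} B A^{-1/2})^{1/2} A^{1/2}`. -/
noncomputable def geomMean {n : ℕ} (A B : Matrix (Fin n) (Fin n) ℂ) :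
    Matrix (Fin n) (Fin n) ℂ :=
  mpow A (1/2) * mpow (mpow A (-(1/2)) * B * mpow A (-(1/2))) (1/2) * mpow A (1/2)

/-- Weighted spectral geometric mean `A ♮_t B = (A⁻¹ # B)^t A (A⁻¹ # B)^t`. -/
noncomputable def spectralMean {n : ℕ} (t : ℝ) (A B : Matrix (Fin n) (Fin n) ℂ) :
    Matrix (Fin n) (Fin n) ℂ :=
  mpow (geomMean A⁻¹ B) t * A * mpow (geomMean A⁻¹ B) t

namespace Matrix

variable {n : ℕ} {A G H M P X : Matrix (Fin n) (Fin n) ℂ}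

lemma PosDef.mul_mul_same (hX : X.PosDef) (hP : P.IsHermitian) (hPu : IsUnit P) :
    (P * X * P).PosDef := by
  simpa only [hP.eq] using hX.conjTranspose_mul_mul_same (mulVec_injective_of_isUnit hPu)

lemma mpow_eq_cfc (hA : A.IsHermitian) (t : ℝ) : mpow A t = cfc (fun x : ℝ => x ^ t) A := by
  rw [hA.cfc_eq, IsHermitian.cfc, Unitary.conjStarAlgAut_apply, mpow, dif_pos hA]
  rfl

lemma mpow_posDef (hA : A.PosDef) (t : ℝ) : (mpow A t).PosDef := by
  rw [mpow, dif_pos hA.1]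
  refine (IsUnit.posDef_star_right_conjugate_iff Unitary.isUnit_coe).2 ?_
  exact posDef_diagonal_iff.2 fun i => by simpa using Real.rpow_pos_of_pos (hA.eigenvalues_pos i) t

lemma mpow_add (hA : A.PosDef) (s t : ℝ) : mpow A s * mpow A t = mpow A (s + t) := by
  have hcont (r : ℝ) : ContinuousOn (fun x : ℝ => x ^ r) (spectrum ℝ A) :=
    finite_real_spectrum.continuousOn _
  rw [mpow_eq_cfc hA.1, mpow_eq_cfc hA.1, mpow_eq_cfc hA.1, ← cfc_mul _ _ A (hcont s) (hcont t)]
  refine cfc_congr fun x hx => (Real.rpow_add ?_ s t).symm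
  obtain ⟨i, rfl⟩ := hA.1.spectrum_real_eq_range_eigenvalues ▸ hx
  exact hA.eigenvalues_pos i

lemma mpow_zero (hA : A.IsHermitian) : mpow A 0 = 1 := by
  simpa [mpow_eq_cfc hA] using cfc_const_one ℝ A

lemma mpow_one (hA : A.IsHermitian) : mpow A 1 = A := by
  simpa [mpow_eq_cfc hA] using cfc_id' ℝ A

lemma mpow_half_mul_self (hA : A.PosDef) : mpow A (1 / 2) * mpow A (1 / 2) = A := by
  rw [mpow_add hA]
  norm_num [mpow_one hA.1]

lemma mpow_mul_mpow_neg (hA : A.PosDef) (t : ℝ) : mpow A t * mpow A (-t) = 1 := by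
  rw [mpow_add hA, add_neg_cancel, mpow_zero hA.1]

lemma mpow_neg_mul_mpow (hA : A.PosDef) (t : ℝ) : mpow A (-t) * mpow A t = 1 := by
  simpa using mpow_mul_mpow_neg hA (-t)

lemma mpow_neg_one (hA : A.PosDef) : mpow A (-1) = A⁻¹ := by
  refine (inv_eq_left_inv ?_).symm
  calc mpow A (-1) * A = mpow A (-1) * mpow A 1 := by rw [mpow_one hA.1]
    _ = 1 := mpow_neg_mul_mpow hA 1

lemma geomMean_posDef (hM : M.PosDef) (hX : X.PosDef) : (geomMean M X).PosDef := by
  have hR := mpow_posDef hM (1 / 2)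
  have hQ := mpow_posDef hM (-(1 / 2))
  exact (mpow_posDef (hX.mul_mul_same hQ.1 hQ.isUnit) _).mul_mul_same hR.1 hR.isUnit

lemma geomMean_mul_inv_mul_geomMean (hM : M.PosDef) (hX : X.PosDef) :
    geomMean M X * M⁻¹ * geomMean M X = X := by
  set R := mpow M (1 / 2)
  set Q := mpow M (-(1 / 2))
  have hQ := mpow_posDef hM (-(1 / 2))
  have hRQ : R * Q = 1 := mpow_mul_mpow_neg hM _
  have hQR : Q * R = 1 := mpow_neg_mul_mpow hM _
  have hMinv : M⁻¹ = Q * Q := by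
    rw [← mpow_neg_one hM, mpow_add hM]
    norm_num
  set S := mpow (Q * X * Q) (1 / 2)
  have hSS : S * S = Q * X * Q := mpow_half_mul_self (hX.mul_mul_same hQ.1 hQ.isUnit)
  calc R * S * R * M⁻¹ * (R * S * R)
      = R * S * (R * Q) * (Q * R) * S * R := by simp only [hMinv, Matrix.mul_assoc]
    _ = R * (S * S) * R := by rw [hRQ, hQR]; simp only [Matrix.mul_one, Matrix.mul_assoc]
    _ = (R * Q) * X * (Q * R) := by rw [hSS]; simp only [Matrix.mul_assoc]
    _ = X := by rw [hRQ, hQR, Matrix.one_mul, Matrix.mul_one]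

open scoped MatrixOrder in
lemma PosDef.eq_of_mul_mul_eq (hA : A.PosDef) (hG : G.PosDef) (hH : H.PosDef)
    (h : G * A * G = H * A * H) : G = H := by
  set R := mpow A (1 / 2)
  have hR := mpow_posDef hA (1 / 2)
  have hRR : R * R = A := mpow_half_mul_self hA
  have hsq : (R * G * R) ^ 2 = (R * H * R) ^ 2 := by
    calc (R * G * R) ^ 2 = R * (G * (R * R) * G) * R := by simp only [sq, Matrix.mul_assoc]
      _ = (R * H * R) ^ 2 := by rw [hRR, h, ← hRR]; simp only [sq, Matrix.mul_assoc]
  have hRGR := (hG.mul_mul_same hR.1 hR.isUnit).posSemidef.nonneg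
  have hRHR := (hH.mul_mul_same hR.1 hR.isUnit).posSemidef.nonneg
  have hconj : R * G * R = R * H * R := (CFC.sq_eq_sq_iff _ _ hRGR hRHR).1 hsq
  exact hR.isUnit.mul_left_cancel (hR.isUnit.mul_right_cancel hconj)

lemma geomMean_eq_iff (hM : M.PosDef) (hX : X.PosDef) (hG : G.PosDef) :
    geomMean M X = G ↔ G * M⁻¹ * G = X := by
  refine ⟨fun h => h ▸ geomMean_mul_inv_mul_geomMean hM hX, fun h => ?_⟩
  refine hM.inv.eq_of_mul_mul_eq (geomMean_posDef hM hX) hG ?_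
  rw [geomMean_mul_inv_mul_geomMean hM hX, h]

end Matrix

theorem spectralMean_unique_solution {n : ℕ} (A B : Matrix (Fin n) (Fin n) ℂ)
    (hA : A.PosDef) (hB : B.PosDef) (t : ℝ) :
    (spectralMean t A B).PosDef ∧
    geomMean A⁻¹ (spectralMean t A B) = mpow (geomMean A⁻¹ B) t ∧
    ∀ X : Matrix (Fin n) (Fin n) ℂ, X.PosDef →
      geomMean A⁻¹ X = mpow (geomMean A⁻¹ B) t → X = spectralMean t A B := by
  have hP := mpow_posDef (geomMean_posDef hA.inv hB) t
  have hS : (spectralMean t A B).PosDef := hA.mul_mul_same hP.1 hP.isUnit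
  have hAA : A⁻¹⁻¹ = A := nonsing_inv_nonsing_inv A ((isUnit_iff_isUnit_det A).mp hA.isUnit)
  refine ⟨hS, (geomMean_eq_iff hA.inv hS hP).2 (by rw [hAA]; rfl), fun X hX hGX => ?_⟩
  rw [← (geomMean_eq_iff hA.inv hX hP).1 hGX, hAA]
  rfl
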